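/- For a group G and G-module A, the formulas ((i,i+1)σ)(g_1,...,g_n) = -σ(g_1,...,g_{i-1}g_i, g_i^{-1}, g_i g_{i+1},...,g_n) (with the first factor acted on by g_1 when i=1, and the last entry replaced by g_n^{-1} when i=n) define an action of the symmetric group Σ_{n+1} on the set C^n(G,A) of functions G^n → A. In particular, the square of each generator (i,i+1) acts as the identity. -/

import Mathlib

/-!
In homogeneous coordinates the formulas become the sign-twisted permutation action. A cochain
`σ` corresponds to the `G`-equivariant function `σ̃ x = x₀ • σ (x₀⁻¹x₁, …, xₙ₋₁⁻¹xₙ)` on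
`G^{n+1}`, and is recovered as `σ g = σ̃ (1, g₁, g₁g₂, …, g₁⋯gₙ)`. The symmetric group acts on
such functions by `(π • σ̃) x = sign π • σ̃ (x ∘ π)`, which visibly respects products and
equivariance; transported back to cochains, the transposition `(i, i+1)` gives exactly the
formulas defining `Tact`.
-/

variable {G A : Type} [Group G] [AddCommGroup A] [DistribMulAction G A]

/-- The action of the transposition `(i, i+1)` of `Σ_{n+1}` (here `i = j+1` is 1-indexed,
`j : Fin n` is its 0-indexed version) on the `n`-cochains `C^n(G,A)`:
`((1,2)σ)(g₁,…,gₙ) = -g₁ • σ(g₁⁻¹, g₁g₂, g₃,…,gₙ)`,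
`((i,i+1)σ)(g₁,…,gₙ) = -σ(g₁,…,g_{i-1}gᵢ, gᵢ⁻¹, gᵢg_{i+1},…,gₙ)` for `1 < i < n`,
`((n,n+1)σ)(g₁,…,gₙ) = -σ(g₁,…,g_{n-1}gₙ, gₙ⁻¹)`. -/
def Tact (n : ℕ) (j : Fin n) (σ : (Fin n → G) → A) : (Fin n → G) → A :=
  fun g =>
    let g' : Fin n → G := fun i =>
      if (i : ℕ) + 1 = (j : ℕ) then g i * g j
      else if i = j then (g j)⁻¹
      else if (i : ℕ) = (j : ℕ) + 1 then g j * g i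
      else g i
    if (j : ℕ) = 0 then -(g j • σ g') else -(σ g')

open Fin Equiv Equiv.Perm

variable {n : ℕ}

def successiveQuotients (x : Fin (n + 1) → G) : Fin n → G :=
  fun i => (x i.castSucc)⁻¹ * x i.succ

lemma successiveQuotients_partialProd (g : Fin n → G) :
    successiveQuotients (partialProd g) = g :=
  funext (partialProd_right_inv g)

lemma partialProd_successiveQuotients (x : Fin (n + 1) → G) :
    partialProd (successiveQuotients x) = (x 0)⁻¹ • x :=
  eq_inv_smul_iff.mpr (partialProd_left_inv x)

lemma successiveQuotients_smul (c : G) (x : Fin (n + 1) → G) :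
    successiveQuotients (c • x) = successiveQuotients x := by
  funext i
  simp [successiveQuotients, mul_assoc]

lemma partialProd_mk_succ (g : Fin n → G) {k : ℕ} (hk : k + 1 < n + 1) :
    partialProd g ⟨k + 1, hk⟩ = partialProd g ⟨k, by omega⟩ * g ⟨k, by omega⟩ :=
  partialProd_succ g ⟨k, by omega⟩

lemma successiveQuotients_partialProd_comp_swap (g : Fin n → G) (j i : Fin n) :
    successiveQuotients (partialProd g ∘ swap j.castSucc j.succ) i =
      if (i : ℕ) + 1 = j then g i * g j
      else if i = j then (g j)⁻¹
      else if (i : ℕ) = j + 1 then g j * g i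
      else g i := by
  -- With raw indices, `subst` turns each consistent case into an instance of `partialProd_mk_succ`.
  obtain ⟨a, ha⟩ := i
  obtain ⟨b, hb⟩ := j
  simp only [successiveQuotients, Function.comp_apply, swap_apply_def, castSucc_mk, succ_mk,
    Fin.mk.injEq]
  split_ifs <;> (try omega) <;> subst_vars <;> simp [partialProd_mk_succ, mul_assoc]

lemma partialProd_swap_apply_zero (g : Fin n → G) (j : Fin n) :
    partialProd g (swap j.castSucc j.succ 0) = if (j : ℕ) = 0 then g j else 1 := by
  split_ifs with hj
  · have h0 : j.castSucc = 0 := Fin.ext hj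
    rw [← h0, swap_apply_left, partialProd_succ, h0, partialProd_zero, one_mul]
  · have h0 : j.castSucc ≠ 0 := fun h => hj (Fin.ext_iff.mp h)
    rw [swap_apply_of_ne_of_ne h0.symm (succ_ne_zero j).symm, partialProd_zero]

def homogenize (σ : (Fin n → G) → A) (x : Fin (n + 1) → G) : A :=
  x 0 • σ (successiveQuotients x)

lemma homogenize_smul (σ : (Fin n → G) → A) (c : G) (x : Fin (n + 1) → G) :
    homogenize σ (c • x) = c • homogenize σ x := by
  rw [homogenize, homogenize, successiveQuotients_smul, Pi.smul_apply, smul_eq_mul, mul_smul]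

lemma homogenize_partialProd (σ : (Fin n → G) → A) (g : Fin n → G) :
    homogenize σ (partialProd g) = σ g := by
  rw [homogenize, successiveQuotients_partialProd, partialProd_zero, one_smul]

def permAct (π : Perm (Fin (n + 1))) (σ : (Fin n → G) → A) (g : Fin n → G) : A :=
  (sign π : ℤ) • homogenize σ (partialProd g ∘ π)

lemma homogenize_permAct (π : Perm (Fin (n + 1))) (σ : (Fin n → G) → A)
    (x : Fin (n + 1) → G) :
    homogenize (permAct π σ) x = (sign π : ℤ) • homogenize σ (x ∘ π) := by
  have h : partialProd (successiveQuotients x) ∘ π = (x 0)⁻¹ • (x ∘ π) := by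
    rw [partialProd_successiveQuotients]; rfl
  rw [homogenize, permAct, h, homogenize_smul, smul_comm, smul_inv_smul]

lemma permAct_one (σ : (Fin n → G) → A) : permAct 1 σ = σ := by
  funext g
  rw [permAct, Perm.sign_one, Units.val_one, one_smul, coe_one, Function.comp_id,
    homogenize_partialProd]

lemma permAct_mul (π τ : Perm (Fin (n + 1))) (σ : (Fin n → G) → A) :
    permAct (π * τ) σ = permAct π (permAct τ σ) := by
  funext g
  rw [permAct, permAct, homogenize_permAct, Perm.sign_mul, Units.val_mul, mul_smul, Perm.coe_mul,
    Function.comp_assoc]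

def permActHom (n : ℕ) : Perm (Fin (n + 1)) →* Function.End ((Fin n → G) → A) where
  toFun := permAct
  map_one' := funext permAct_one
  map_mul' π τ := funext (permAct_mul π τ)

lemma permAct_swap_castSucc_succ (j : Fin n) :
    permAct (G := G) (A := A) (swap j.castSucc j.succ) = Tact n j := by
  funext σ g
  have hsign : sign (swap j.castSucc j.succ) = -1 := sign_swap (castSucc_lt_succ (i := j)).ne
  have hquot : successiveQuotients (partialProd g ∘ swap j.castSucc j.succ) = _ :=
    funext (successiveQuotients_partialProd_comp_swap g j)
  rw [permAct, homogenize, hsign, hquot, Function.comp_apply, partialProd_swap_apply_zero, Tact]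
  split_ifs <;> simp

theorem symmetric_group_action_on_cochains (n : ℕ) :
    (∀ j : Fin n, Tact (G := G) (A := A) n j ∘ Tact n j = id) ∧
    ∃ ρ : Equiv.Perm (Fin (n + 1)) →* Function.End ((Fin n → G) → A),
      ∀ j : Fin n, ρ (Equiv.swap j.castSucc j.succ) = Tact n j := by
  have hρ (j : Fin n) : permActHom n (swap j.castSucc j.succ) = Tact (G := G) (A := A) n j :=
    permAct_swap_castSucc_succ j
  refine ⟨fun j => ?_, permActHom n, hρ⟩
  have hsquare : permActHom (G := G) (A := A) n (swap j.castSucc j.succ) *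
      permActHom n (swap j.castSucc j.succ) = 1 := by
    rw [← map_mul, swap_mul_self, map_one]
  rwa [hρ] at hsquare
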